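/- arXiv:2105.02492 — 6 statements merged into one kernel-verified Lean document; each statement's English description precedes it below -/
import Mathlib

section
/- Let φ : ℝ → ℝ be a smooth, even, 2π-periodic function that vanishes on a neighborhood of every point of (π/4)·ℤ. Then the series ∑_{m ≥ 1, m ≡ 5 or 7 mod 8} (1/π)∫_{−π}^{π} φ(t) cos(mt) dt converges, with sum equal to −(1/(2π)) ∫_{−π}^{π} φ(t) · cos(t)/cos(2t) dt. -/
open Real intervalIntegral Filter

private lemma pts_cos_sin (A B : ℝ) :
    Real.cos A * Real.sin B = (Real.sin (A + B) - Real.sin (A - B)) / 2 := by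
  rw [Real.sin_add, Real.sin_sub]; ring

private lemma trig_step (A t : ℝ) :
    (Real.cos (A + 5 * t) + Real.cos (A + 7 * t)) * Real.sin (4 * t) =
      Real.cos t * (Real.sin (A + 10 * t) - Real.sin (A + 2 * t)) := by
  have h1 : Real.cos (A + 5 * t) * Real.sin (4 * t)
      = (Real.sin (A + 9 * t) - Real.sin (A + t)) / 2 := by
    rw [pts_cos_sin, show A + 5 * t + 4 * t = A + 9 * t by ring,
      show A + 5 * t - 4 * t = A + t by ring]
  have h2 : Real.cos (A + 7 * t) * Real.sin (4 * t)
      = (Real.sin (A + 11 * t) - Real.sin (A + 3 * t)) / 2 := by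
    rw [pts_cos_sin, show A + 7 * t + 4 * t = A + 11 * t by ring,
      show A + 7 * t - 4 * t = A + 3 * t by ring]
  have h3 : Real.cos t * Real.sin (A + 10 * t)
      = (Real.sin (A + 11 * t) + Real.sin (A + 9 * t)) / 2 := by
    rw [pts_cos_sin, show t + (A + 10 * t) = A + 11 * t by ring,
      show t - (A + 10 * t) = -(A + 9 * t) by ring, Real.sin_neg]
    ring
  have h4 : Real.cos t * Real.sin (A + 2 * t)
      = (Real.sin (A + 3 * t) + Real.sin (A + t)) / 2 := by
    rw [pts_cos_sin, show t + (A + 2 * t) = A + 3 * t by ring,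
      show t - (A + 2 * t) = -(A + t) by ring, Real.sin_neg]
    ring
  rw [add_mul, h1, h2, mul_sub, h3, h4]; ring

private lemma trig_sum (K : ℕ) (t : ℝ) :
    (∑ k ∈ Finset.range K,
        (Real.cos ((8 * (k : ℝ) + 5) * t) + Real.cos ((8 * (k : ℝ) + 7) * t)))
        * Real.sin (4 * t)
      = Real.cos t * (Real.sin ((8 * (K : ℝ) + 2) * t) - Real.sin (2 * t)) := by
  induction K with
  | zero => simp
  | succ K ih =>
    rw [Finset.sum_range_succ, add_mul, ih]
    have := trig_step (8 * (K : ℝ) * t) t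
    push_cast
    rw [show (8 * ((K : ℝ) + 1) + 2) * t = 8 * (K : ℝ) * t + 10 * t by ring,
      show (8 * (K : ℝ) + 5) * t = 8 * (K : ℝ) * t + 5 * t by ring,
      show (8 * (K : ℝ) + 7) * t = 8 * (K : ℝ) * t + 7 * t by ring,
      show (8 * (K : ℝ) + 2) * t = 8 * (K : ℝ) * t + 2 * t by ring]
    linarith [this]

private lemma ibp_cos {g g' : ℝ → ℝ} (hg : ∀ x, HasDerivAt g (g' x) x)
    (hg' : Continuous g') (hga : g (-Real.pi) = 0) (hgb : g Real.pi = 0)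
    {c : ℝ} (hc : c ≠ 0) :
    ∫ t in (-Real.pi)..Real.pi, g t * Real.cos (c * t)
      = -(1 / c) * ∫ t in (-Real.pi)..Real.pi, g' t * Real.sin (c * t) := by
  have hv : ∀ x : ℝ, HasDerivAt (fun t => Real.sin (c * t) / c) (Real.cos (c * x)) x := by
    intro x
    have h1 : HasDerivAt (fun t : ℝ => c * t) c x := by
      simpa using (hasDerivAt_id x).const_mul c
    have h2 := (h1.sin).div_const c
    exact h2.congr_deriv (by field_simp)
  rw [intervalIntegral.integral_mul_deriv_eq_deriv_mul (fun x _ => hg x) (fun x _ => hv x)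
      (hg'.intervalIntegrable _ _)
      ((Real.continuous_cos.comp (continuous_const.mul continuous_id)).intervalIntegrable _ _),
    hga, hgb]
  have h3 : ∀ t : ℝ, g' t * (Real.sin (c * t) / c) = (1 / c) * (g' t * Real.sin (c * t)) :=
    fun t => by ring
  simp only [h3, intervalIntegral.integral_const_mul]
  ring

private lemma ibp_sin {g g' : ℝ → ℝ} (hg : ∀ x, HasDerivAt g (g' x) x)
    (hg' : Continuous g') (hga : g (-Real.pi) = 0) (hgb : g Real.pi = 0)
    {c : ℝ} (hc : c ≠ 0) :
    ∫ t in (-Real.pi)..Real.pi, g t * Real.sin (c * t)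
      = (1 / c) * ∫ t in (-Real.pi)..Real.pi, g' t * Real.cos (c * t) := by
  have hv : ∀ x : ℝ, HasDerivAt (fun t => -(Real.cos (c * t)) / c) (Real.sin (c * x)) x := by
    intro x
    have h1 : HasDerivAt (fun t : ℝ => c * t) c x := by
      simpa using (hasDerivAt_id x).const_mul c
    have h2 := ((h1.cos).neg).div_const c
    exact h2.congr_deriv (by field_simp)
  rw [intervalIntegral.integral_mul_deriv_eq_deriv_mul (fun x _ => hg x) (fun x _ => hv x)
      (hg'.intervalIntegrable _ _)
      ((Real.continuous_sin.comp (continuous_const.mul continuous_id)).intervalIntegrable _ _),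
    hga, hgb]
  have h3 : ∀ t : ℝ, g' t * (-(Real.cos (c * t)) / c) = -((1 / c) * (g' t * Real.cos (c * t))) :=
    fun t => by ring
  simp only [h3, intervalIntegral.integral_neg, intervalIntegral.integral_const_mul]
  ring

theorem hasSum_fourier_five_seven_mod_eight
    (φ : ℝ → ℝ) (hsmooth : ContDiff ℝ (⊤ : ℕ∞) φ)
    (heven : ∀ t, φ (-t) = φ t)
    (hper : Function.Periodic φ (2 * Real.pi))
    (hvanish : ∀ k : ℤ, ∀ᶠ t in nhds ((Real.pi / 4) * k), φ t = 0) :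
    HasSum
      (fun m : ℕ =>
        if 1 ≤ m ∧ (m % 8 = 5 ∨ m % 8 = 7) then
          (1 / Real.pi) * ∫ t in (-Real.pi)..Real.pi, φ t * Real.cos (m * t)
        else 0)
      (-(1 / (2 * Real.pi)) * ∫ t in (-Real.pi)..Real.pi, φ t * Real.cos t / Real.cos (2 * t)) := by
  have h8 : ContDiff ℝ ((⊤ : ℕ∞) : WithTop ℕ∞) φ := hsmooth.of_le (by simp)
  have hφc : Continuous φ := hsmooth.continuous
  have hφd : ∀ x, HasDerivAt φ (deriv φ x) x :=
    fun x => (h8.differentiable (by simp) x).hasDerivAt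
  have hDc : Continuous (deriv φ) := h8.continuous_deriv (by exact_mod_cast le_top)
  have hDsm : ContDiff ℝ ((⊤ : ℕ∞) : WithTop ℕ∞) (deriv φ) := (contDiff_infty_iff_deriv.mp h8).2
  have hDd : ∀ x, HasDerivAt (deriv φ) (deriv (deriv φ) x) x :=
    fun x => (hDsm.differentiable (by simp) x).hasDerivAt
  have hD2c : Continuous (deriv (deriv φ)) := hDsm.continuous_deriv (by exact_mod_cast le_top)
  have hvan : ∀ t : ℝ, Real.sin (4 * t) = 0 → ∀ᶠ s in nhds t, φ s = 0 := by
    intro t ht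
    rcases Real.sin_eq_zero_iff.mp ht with ⟨n, hn⟩
    have h : (Real.pi / 4) * (n : ℝ) = t := by linarith
    have := hvanish n; rw [h] at this; exact this
  have hφ0 : ∀ t, Real.sin (4 * t) = 0 → φ t = 0 := fun t ht => (hvan t ht).self_of_nhds
  have hvanc : ∀ t : ℝ, Real.cos (2 * t) = 0 → φ t = 0 := by
    intro t ht
    rcases Real.cos_eq_zero_iff.mp ht with ⟨n, hn⟩
    have h : (Real.pi / 4) * ((2 * n + 1 : ℤ) : ℝ) = t := by push_cast; linarith
    have := hvanish (2 * n + 1); rw [h] at this; exact this.self_of_nhds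
  have hvanD : ∀ t : ℝ, Real.sin (4 * t) = 0 →
      ∀ᶠ s in nhds t, φ s = 0 ∧ deriv φ s = 0 := by
    intro t ht
    obtain ⟨U, hUsub, hUopen, htU⟩ := mem_nhds_iff.mp (hvan t ht)
    filter_upwards [hUopen.mem_nhds htU] with s hs
    refine ⟨hUsub hs, ?_⟩
    have hev : φ =ᶠ[nhds s] (fun _ => 0) := by
      filter_upwards [hUopen.mem_nhds hs] with y hy using hUsub hy
    rw [hev.deriv_eq]; simp
  -- boundary vanishing
  have hs4pi : Real.sin (4 * Real.pi) = 0 := by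
    simpa using Real.sin_int_mul_pi (4 : ℤ)
  have hs4mpi : Real.sin (4 * -Real.pi) = 0 := by
    simpa using Real.sin_int_mul_pi (-4 : ℤ)
  have hba := (hvanD _ hs4mpi).self_of_nhds
  have hbb := (hvanD _ hs4pi).self_of_nhds
  -- the function ψ
  set ψ : ℝ → ℝ := fun t => φ t * Real.cos t / Real.sin (4 * t) with hψdef
  set ψ' : ℝ → ℝ := fun t =>
    (deriv φ t * Real.cos t - φ t * Real.sin t) / Real.sin (4 * t)
      - φ t * Real.cos t * (4 * Real.cos (4 * t)) / (Real.sin (4 * t)) ^ 2 with hψ'def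
  have hsin4d : ∀ x : ℝ, HasDerivAt (fun t => Real.sin (4 * t)) (4 * Real.cos (4 * x)) x := by
    intro x
    have h1 : HasDerivAt (fun t : ℝ => 4 * t) 4 x := by
      simpa using (hasDerivAt_id x).const_mul 4
    simpa [mul_comm] using h1.sin
  have hψderiv : ∀ x, HasDerivAt ψ (ψ' x) x := by
    intro x
    by_cases hx : Real.sin (4 * x) = 0
    · have hev := hvanD x hx
      have hev0 : ψ =ᶠ[nhds x] (fun _ => 0) := by
        filter_upwards [hev] with s hs
        simp [hψdef, hs.1]
      have h0 : HasDerivAt ψ 0 x := (hasDerivAt_const x (0:ℝ)).congr_of_eventuallyEq hev0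
      have h1 : φ x = 0 := hev.self_of_nhds.1
      have h2 : deriv φ x = 0 := hev.self_of_nhds.2
      have : ψ' x = 0 := by simp [hψ'def, h1, h2]
      rw [this]; exact h0
    · have hnum : HasDerivAt (fun t => φ t * Real.cos t)
          (deriv φ x * Real.cos x - φ x * Real.sin x) x := by
        have := (hφd x).mul (Real.hasDerivAt_cos x)
        exact this.congr_deriv (by ring)
      have hdiv := hnum.div (hsin4d x) hx
      refine hdiv.congr_deriv ?_
      simp only [hψ'def]
      field_simp
  have hψdiff : Differentiable ℝ ψ := fun x => (hψderiv x).differentiableAt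
  have hψcont : Continuous ψ := hψdiff.continuous
  have hψ'cont : Continuous ψ' := by
    rw [continuous_iff_continuousAt]
    intro x
    by_cases hx : Real.sin (4 * x) = 0
    · have hev := hvanD x hx
      have hev0 : ψ' =ᶠ[nhds x] (fun _ => 0) := by
        filter_upwards [hev] with s hs
        simp [hψ'def, hs.1, hs.2]
      exact continuousAt_const.congr hev0.symm
    · have hc4 : Continuous (fun t : ℝ => Real.sin (4 * t)) :=
        Real.continuous_sin.comp (continuous_const.mul continuous_id)
      apply ContinuousAt.sub
      · exact ((hDc.continuousAt.mul Real.continuous_cos.continuousAt).sub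
          (hφc.continuousAt.mul Real.continuous_sin.continuousAt)).div hc4.continuousAt hx
      · exact ((hφc.continuousAt.mul Real.continuous_cos.continuousAt).mul
          (continuous_const.mul ((Real.continuous_cos.comp
            (continuous_const.mul continuous_id)))).continuousAt).div
          (hc4.continuousAt.pow 2) (pow_ne_zero 2 hx)
  have hψpi : ψ Real.pi = 0 := by simp [hψdef, hbb.1]
  have hψmpi : ψ (-Real.pi) = 0 := by simp [hψdef, hba.1]
  -- summability
  set f : ℕ → ℝ := fun m =>
    if 1 ≤ m ∧ (m % 8 = 5 ∨ m % 8 = 7) then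
      (1 / Real.pi) * ∫ t in (-Real.pi)..Real.pi, φ t * Real.cos (m * t)
    else 0 with hfdef
  obtain ⟨M, hM⟩ := (isCompact_uIcc (a := -Real.pi) (b := Real.pi)).exists_bound_of_continuousOn
    hD2c.continuousOn
  have hM0 : 0 ≤ M := le_trans (norm_nonneg _) (hM Real.pi Set.right_mem_uIcc)
  have habs : |Real.pi - -Real.pi| = 2 * Real.pi := by
    rw [sub_neg_eq_add, abs_of_nonneg (by positivity)]; ring
  have hcoef : ∀ m : ℕ, 1 ≤ m →
      ‖∫ t in (-Real.pi)..Real.pi, φ t * Real.cos (m * t)‖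
        ≤ 1 / (m : ℝ) ^ 2 * (M * (2 * Real.pi)) := by
    intro m hm
    have hc : ((m : ℝ)) ≠ 0 := Nat.cast_ne_zero.mpr (by omega)
    rw [ibp_cos hφd hDc hba.1 hbb.1 hc, ibp_sin hDd hD2c hba.2 hbb.2 hc]
    have hIb : ‖∫ t in (-Real.pi)..Real.pi, deriv (deriv φ) t * Real.cos ((m:ℝ) * t)‖
        ≤ M * |Real.pi - -Real.pi| := by
      apply intervalIntegral.norm_integral_le_of_norm_le_const
      intro x hx
      have h1 : ‖deriv (deriv φ) x‖ ≤ M := hM x (Set.uIoc_subset_uIcc hx)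
      calc ‖deriv (deriv φ) x * Real.cos ((m:ℝ) * x)‖
          = ‖deriv (deriv φ) x‖ * ‖Real.cos ((m:ℝ) * x)‖ := norm_mul _ _
        _ ≤ M * 1 := mul_le_mul h1 (by rw [Real.norm_eq_abs]; exact Real.abs_cos_le_one _)
            (norm_nonneg _) hM0
        _ = M := mul_one M
    rw [habs] at hIb
    have heq : ‖-(1 / (m:ℝ)) * ((1 / (m:ℝ)) *
        ∫ t in (-Real.pi)..Real.pi, deriv (deriv φ) t * Real.cos ((m:ℝ) * t))‖
        = 1 / (m:ℝ)^2 * ‖∫ t in (-Real.pi)..Real.pi, deriv (deriv φ) t * Real.cos ((m:ℝ) * t)‖ := by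
      rw [norm_mul, norm_mul, norm_neg]
      simp only [Real.norm_eq_abs]
      rw [abs_of_nonneg (by positivity : (0:ℝ) ≤ 1/(m:ℝ))]
      ring
    rw [heq]
    exact mul_le_mul_of_nonneg_left hIb (by positivity)
  set C2 : ℝ := (1 / Real.pi) * (M * (2 * Real.pi)) with hC2def
  have hC20 : 0 ≤ C2 := by positivity
  have hfb : ∀ m : ℕ, ‖f m‖ ≤ (4 * C2) * (1 / ((m : ℝ) + 1) ^ 2) := by
    intro m
    by_cases hcond : 1 ≤ m ∧ (m % 8 = 5 ∨ m % 8 = 7)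
    · have hm1 : (1:ℝ) ≤ (m:ℝ) := by exact_mod_cast hcond.1
      have h1 : ‖f m‖ ≤ (1 / Real.pi) * (1 / (m : ℝ) ^ 2 * (M * (2 * Real.pi))) := by
        rw [hfdef]; simp only [if_pos hcond]
        rw [norm_mul, Real.norm_eq_abs (1/Real.pi), abs_of_nonneg (by positivity : (0:ℝ) ≤ 1/Real.pi)]
        exact mul_le_mul_of_nonneg_left (hcoef m hcond.1) (by positivity)
      have h2 : (1 / Real.pi) * (1 / (m : ℝ) ^ 2 * (M * (2 * Real.pi)))
          ≤ (4 * C2) * (1 / ((m : ℝ) + 1) ^ 2) := by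
        rw [hC2def]
        have h3 : 1 / ((m:ℝ))^2 ≤ 4 * (1 / ((m : ℝ) + 1) ^ 2) := by
          rw [show (4:ℝ) * (1 / ((m : ℝ) + 1) ^ 2) = 4 / ((m : ℝ) + 1) ^ 2 by ring,
            div_le_div_iff₀ (by positivity) (by positivity)]
          nlinarith
        calc (1 / Real.pi) * (1 / (m : ℝ) ^ 2 * (M * (2 * Real.pi)))
            ≤ (1 / Real.pi) * ((4 * (1 / ((m : ℝ) + 1) ^ 2)) * (M * (2 * Real.pi))) := by
              apply mul_le_mul_of_nonneg_left _ (by positivity)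
              exact mul_le_mul_of_nonneg_right h3 (by positivity)
          _ = (4 * ((1 / Real.pi) * (M * (2 * Real.pi)))) * (1 / ((m : ℝ) + 1) ^ 2) := by ring
      exact le_trans h1 h2
    · rw [hfdef]; simp only [if_neg hcond]
      simpa using by positivity
  have hsummable : Summable f := by
    apply Summable.of_norm_bounded _ hfb
    apply Summable.mul_left
    have hbase : Summable (fun n : ℕ => 1 / (n : ℝ) ^ 2) :=
      Real.summable_one_div_nat_pow.mpr (by norm_num)
    have := (summable_nat_add_iff 1).mpr hbase
    apply this.congr
    intro n
    push_cast
    ring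
  have hcc : ∀ c : ℝ, Continuous fun t : ℝ => Real.cos (c * t) :=
    fun c => Real.continuous_cos.comp (continuous_const.mul continuous_id)
  have hsc : ∀ c : ℝ, Continuous fun t : ℝ => Real.sin (c * t) :=
    fun c => Real.continuous_sin.comp (continuous_const.mul continuous_id)
  have hfsum : ∀ K : ℕ, ∑ m ∈ Finset.range (8*K), f m =
      ∑ k ∈ Finset.range K,
        ((1/Real.pi) * (∫ t in (-Real.pi)..Real.pi, φ t * Real.cos ((8*(k:ℝ)+5) * t))
          + (1/Real.pi) * (∫ t in (-Real.pi)..Real.pi, φ t * Real.cos ((8*(k:ℝ)+7) * t))) := by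
    intro K
    induction K with
    | zero => simp
    | succ K ih =>
      rw [show 8*(K+1) = 8*K+1+1+1+1+1+1+1+1 by ring]
      simp only [Finset.sum_range_succ]
      rw [ih]
      have e0 : f (8*K) = 0 := by simp only [hfdef]; exact if_neg (by omega)
      have e1 : f (8*K+1) = 0 := by simp only [hfdef]; exact if_neg (by omega)
      have e2 : f (8*K+1+1) = 0 := by simp only [hfdef]; exact if_neg (by omega)
      have e3 : f (8*K+1+1+1) = 0 := by simp only [hfdef]; exact if_neg (by omega)
      have e4 : f (8*K+1+1+1+1) = 0 := by simp only [hfdef]; exact if_neg (by omega)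
      have e5 : f (8*K+1+1+1+1+1)
          = (1/Real.pi) * ∫ t in (-Real.pi)..Real.pi,
              φ t * Real.cos (((8*K+1+1+1+1+1 : ℕ) : ℝ) * t) := by
        simp only [hfdef]; exact if_pos (by omega)
      have e6 : f (8*K+1+1+1+1+1+1) = 0 := by simp only [hfdef]; exact if_neg (by omega)
      have e7 : f (8*K+1+1+1+1+1+1+1)
          = (1/Real.pi) * ∫ t in (-Real.pi)..Real.pi,
              φ t * Real.cos (((8*K+1+1+1+1+1+1+1 : ℕ) : ℝ) * t) := by
        simp only [hfdef]; exact if_pos (by omega)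
      rw [e0, e1, e2, e3, e4, e5, e6, e7]
      push_cast
      rw [show 8*(K:ℝ)+1+1+1+1+1+1+1 = 8*(K:ℝ)+7 by ring,
        show 8*(K:ℝ)+1+1+1+1+1 = 8*(K:ℝ)+5 by ring]
      ring
  have hswap : ∀ K : ℕ, ∑ m ∈ Finset.range (8*K), f m
      = (1/Real.pi) * ∫ t in (-Real.pi)..Real.pi,
          φ t * (∑ k ∈ Finset.range K,
            (Real.cos ((8*(k:ℝ)+5)*t) + Real.cos ((8*(k:ℝ)+7)*t))) := by
    intro K
    have h1 : (∫ t in (-Real.pi)..Real.pi,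
        φ t * (∑ k ∈ Finset.range K,
          (Real.cos ((8*(k:ℝ)+5)*t) + Real.cos ((8*(k:ℝ)+7)*t))))
        = ∑ k ∈ Finset.range K, ∫ t in (-Real.pi)..Real.pi,
            (φ t * Real.cos ((8*(k:ℝ)+5)*t) + φ t * Real.cos ((8*(k:ℝ)+7)*t)) := by
      rw [← intervalIntegral.integral_finset_sum]
      · apply intervalIntegral.integral_congr
        intro t _
        beta_reduce
        rw [Finset.mul_sum]
        exact Finset.sum_congr rfl (fun k _ => by ring)
      · intro k _
        exact ((hφc.mul (hcc _)).add (hφc.mul (hcc _))).intervalIntegrable _ _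
    rw [hfsum K, h1, Finset.mul_sum]
    apply Finset.sum_congr rfl
    intro k _
    rw [intervalIntegral.integral_add (f := fun t => φ t * Real.cos ((8*(k:ℝ)+5)*t))
      (g := fun t => φ t * Real.cos ((8*(k:ℝ)+7)*t)) ((hφc.mul (hcc _)).intervalIntegrable _ _)
      ((hφc.mul (hcc _)).intervalIntegrable _ _)]
    ring
  have hpoint : ∀ (K : ℕ) (t : ℝ),
      φ t * (∑ k ∈ Finset.range K,
        (Real.cos ((8*(k:ℝ)+5)*t) + Real.cos ((8*(k:ℝ)+7)*t)))
      = ψ t * Real.sin ((8*(K:ℝ)+2)*t)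
        + -(1/2) * (φ t * Real.cos t / Real.cos (2*t)) := by
    intro K t
    by_cases hφt : φ t = 0
    · simp [hψdef, hφt]
    · have h4 : Real.sin (4*t) ≠ 0 := fun h => hφt (hφ0 t h)
      have hc2 : Real.cos (2*t) ≠ 0 := fun h => hφt (hvanc t h)
      have hdouble : Real.sin (4*t) = 2*Real.sin (2*t)*Real.cos (2*t) := by
        rw [show (4:ℝ)*t = 2*(2*t) by ring, Real.sin_two_mul]
      have hs2 : Real.sin (2*t) ≠ 0 := by
        intro h; apply h4; rw [hdouble, h]; ring
      have hsumval : (∑ k ∈ Finset.range K,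
          (Real.cos ((8*(k:ℝ)+5)*t) + Real.cos ((8*(k:ℝ)+7)*t)))
          = Real.cos t * (Real.sin ((8*(K:ℝ)+2)*t) - Real.sin (2*t)) / Real.sin (4*t) := by
        rw [eq_div_iff h4]; exact trig_sum K t
      rw [hsumval, hψdef]
      beta_reduce
      rw [hdouble]
      field_simp
      ring
  have hptc : ∀ t : ℝ, φ t * Real.cos t / Real.cos (2*t) = 2 * ψ t * Real.sin (2*t) := by
    intro t
    by_cases hφt : φ t = 0
    · simp [hψdef, hφt]
    · have h4 : Real.sin (4*t) ≠ 0 := fun h => hφt (hφ0 t h)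
      have hc2 : Real.cos (2*t) ≠ 0 := fun h => hφt (hvanc t h)
      have hdouble : Real.sin (4*t) = 2*Real.sin (2*t)*Real.cos (2*t) := by
        rw [show (4:ℝ)*t = 2*(2*t) by ring, Real.sin_two_mul]
      have hs2 : Real.sin (2*t) ≠ 0 := by
        intro h; apply h4; rw [hdouble, h]; ring
      rw [hψdef]
      beta_reduce
      rw [hdouble]
      field_simp
  have hcont2 : Continuous (fun t : ℝ => φ t * Real.cos t / Real.cos (2*t)) := by
    rw [show (fun t : ℝ => φ t * Real.cos t / Real.cos (2*t))
        = fun t => 2 * ψ t * Real.sin (2*t) from funext hptc]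
    exact (continuous_const.mul hψcont).mul (hsc 2)
  have hofK : ∀ K : ℕ, ∑ m ∈ Finset.range (8*K), f m
      = (1/Real.pi) * (∫ t in (-Real.pi)..Real.pi, ψ t * Real.sin ((8*(K:ℝ)+2)*t))
        + -(1/(2*Real.pi)) * ∫ t in (-Real.pi)..Real.pi,
            φ t * Real.cos t / Real.cos (2*t) := by
    intro K
    rw [hswap K]
    rw [intervalIntegral.integral_congr
      (g := fun t => ψ t * Real.sin ((8*(K:ℝ)+2)*t)
        + -(1/2) * (φ t * Real.cos t / Real.cos (2*t))) (fun t _ => hpoint K t)]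
    rw [intervalIntegral.integral_add (f := fun t => ψ t * Real.sin ((8*(K:ℝ)+2)*t))
      (g := fun t => -(1/2) * (φ t * Real.cos t / Real.cos (2*t)))
      ((hψcont.mul (hsc _)).intervalIntegrable _ _)
      ((continuous_const.mul hcont2).intervalIntegrable _ _),
      intervalIntegral.integral_const_mul]
    ring
  obtain ⟨M2, hM2⟩ := (isCompact_uIcc (a := -Real.pi)
    (b := Real.pi)).exists_bound_of_continuousOn hψ'cont.continuousOn
  have hM20 : 0 ≤ M2 := le_trans (norm_nonneg _) (hM2 Real.pi Set.right_mem_uIcc)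
  have hosc : Filter.Tendsto
      (fun K : ℕ => ∫ t in (-Real.pi)..Real.pi, ψ t * Real.sin ((8*(K:ℝ)+2)*t))
      Filter.atTop (nhds 0) := by
    have hb : ∀ K : ℕ, ‖∫ t in (-Real.pi)..Real.pi, ψ t * Real.sin ((8*(K:ℝ)+2)*t)‖
        ≤ (M2 * (2*Real.pi)) / (8*(K:ℝ)+2) := by
      intro K
      have hcne : (8*(K:ℝ)+2) ≠ 0 := by positivity
      rw [ibp_sin hψderiv hψ'cont hψmpi hψpi hcne]
      have hIb : ‖∫ t in (-Real.pi)..Real.pi, ψ' t * Real.cos ((8*(K:ℝ)+2)*t)‖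
          ≤ M2 * |Real.pi - -Real.pi| := by
        apply intervalIntegral.norm_integral_le_of_norm_le_const
        intro x hx
        calc ‖ψ' x * Real.cos ((8*(K:ℝ)+2)*x)‖
            = ‖ψ' x‖ * ‖Real.cos ((8*(K:ℝ)+2)*x)‖ := norm_mul _ _
          _ ≤ M2 * 1 := mul_le_mul (hM2 x (Set.uIoc_subset_uIcc hx))
              (by rw [Real.norm_eq_abs]; exact Real.abs_cos_le_one _) (norm_nonneg _) hM20
          _ = M2 := mul_one M2
      rw [habs] at hIb
      rw [norm_mul, Real.norm_eq_abs (1/(8*(K:ℝ)+2)),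
        abs_of_nonneg (by positivity : (0:ℝ) ≤ 1/(8*(K:ℝ)+2))]
      calc (1/(8*(K:ℝ)+2)) * ‖∫ t in (-Real.pi)..Real.pi, ψ' t * Real.cos ((8*(K:ℝ)+2)*t)‖
          ≤ (1/(8*(K:ℝ)+2)) * (M2 * (2*Real.pi)) :=
            mul_le_mul_of_nonneg_left hIb (by positivity)
        _ = (M2 * (2*Real.pi)) / (8*(K:ℝ)+2) := by ring
    apply squeeze_zero_norm hb
    apply Filter.Tendsto.div_atTop tendsto_const_nhds
    exact Filter.tendsto_atTop_add_const_right _ 2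
      (Filter.Tendsto.const_mul_atTop (by norm_num : (0:ℝ) < 8) tendsto_natCast_atTop_atTop)
  have hTlim : Filter.Tendsto (fun K : ℕ => ∑ m ∈ Finset.range (8*K), f m) Filter.atTop
      (nhds (-(1/(2*Real.pi)) * ∫ t in (-Real.pi)..Real.pi,
        φ t * Real.cos t / Real.cos (2*t))) := by
    apply Filter.Tendsto.congr (fun K => (hofK K).symm)
    have h2 := (hosc.const_mul (1/Real.pi)).add (tendsto_const_nhds
      (x := -(1/(2*Real.pi)) * ∫ t in (-Real.pi)..Real.pi,
        φ t * Real.cos t / Real.cos (2*t)) (f := Filter.atTop (α := ℕ)))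
    simpa using h2
  have h8K : Filter.Tendsto (fun K : ℕ => 8*K) Filter.atTop Filter.atTop :=
    Filter.tendsto_atTop_mono (fun n => by simp only [id_eq]; omega) Filter.tendsto_id
  have hT2 : Filter.Tendsto (fun K : ℕ => ∑ m ∈ Finset.range (8*K), f m) Filter.atTop
      (nhds (∑' m, f m)) := (hsummable.hasSum.tendsto_sum_nat).comp h8K
  have hfinal : (∑' m, f m) = -(1/(2*Real.pi)) * ∫ t in (-Real.pi)..Real.pi,
      φ t * Real.cos t / Real.cos (2*t) := tendsto_nhds_unique hT2 hTlim
  rw [← hfinal]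
  exact hsummable.hasSum
end

section
/- Let φ : ℝ → ℝ be a smooth, even, 2π-periodic function that vanishes on a neighborhood of every point of (π/2)·ℤ. Then the series ∑_{m ≥ 1, m ≡ 3 mod 4} (1/π)∫_{−π}^{π} φ(t) cos(mt) dt converges, with sum equal to −(1/(2π)) ∫_{−π}^{π} φ(t) · 1/(2cos(t)) dt. -/
open Real MeasureTheory Filter Topology intervalIntegral

theorem hasSum_fourier_three_mod_four
    (φ : ℝ → ℝ) (hsmooth : ContDiff ℝ (⊤ : ℕ∞) φ)
    (heven : ∀ t, φ (-t) = φ t)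
    (hper : Function.Periodic φ (2 * Real.pi))
    (hvanish : ∀ k : ℤ, ∀ᶠ t in nhds ((Real.pi / 2) * k), φ t = 0) :
    HasSum
      (fun m : ℕ =>
        if 1 ≤ m ∧ m % 4 = 3 then
          (1 / Real.pi) * ∫ t in (-Real.pi)..Real.pi, φ t * Real.cos (m * t)
        else 0)
      (-(1 / (2 * Real.pi)) * ∫ t in (-Real.pi)..Real.pi, φ t * (1 / (2 * Real.cos t))) := by
  have hπ : (0:ℝ) < π := Real.pi_pos
  have hπne : (π:ℝ) ≠ 0 := hπ.ne'
  -- smoothness of φ and its derivatives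
  have hφ : ContDiff ℝ (⊤:ℕ∞) φ := hsmooth.of_le (by simp)
  have hφ1 : ContDiff ℝ (⊤:ℕ∞) (deriv φ) := (contDiff_infty_iff_deriv.mp hφ).2
  have hφ2 : ContDiff ℝ (⊤:ℕ∞) (deriv (deriv φ)) := (contDiff_infty_iff_deriv.mp hφ1).2
  set ψ : ℝ → ℝ := fun t => φ t / (2 * Real.sin (2 * t)) with hψdef
  -- φ vanishes near every zero of sin(2t)
  have hvan : ∀ t : ℝ, Real.sin (2*t) = 0 → ∀ᶠ s in nhds t, φ s = 0 := by
    intro t ht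
    obtain ⟨n, hn⟩ := Real.sin_eq_zero_iff.mp ht
    have h : t = (π/2) * n := by linarith
    rw [h]; exact hvanish n
  have hφzero : ∀ t : ℝ, Real.sin (2*t) = 0 → φ t = 0 := fun t ht => (hvan t ht).self_of_nhds
  have hψzero : ∀ t : ℝ, Real.sin (2*t) = 0 → ψ t = 0 := by
    intro t ht; simp [hψdef, hφzero t ht]
  -- smoothness of ψ
  have hψ_smooth : ContDiff ℝ (⊤:ℕ∞) ψ := by
    rw [contDiff_iff_contDiffAt]
    intro t
    by_cases ht : Real.sin (2*t) = 0
    · have h0 : ψ =ᶠ[nhds t] (fun _ => (0:ℝ)) := by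
        filter_upwards [hvan t ht] with s hs
        simp [hψdef, hs]
      exact (contDiffAt_const (c := (0:ℝ))).congr_of_eventuallyEq h0
    · exact (hφ.contDiffAt).div
        ((contDiff_const.mul (Real.contDiff_sin.comp (contDiff_const.mul contDiff_id))).contDiffAt)
        (by simpa using ht)
  have hψ1 : ContDiff ℝ (⊤:ℕ∞) (deriv ψ) := (contDiff_infty_iff_deriv.mp hψ_smooth).2
  -- boundary values
  have hs2pi : Real.sin (2*π) = 0 := by
    rw [Real.sin_eq_zero_iff]; exact ⟨2, by ring⟩
  have hs2mpi : Real.sin (2*(-π)) = 0 := by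
    rw [Real.sin_eq_zero_iff]; exact ⟨-2, by push_cast; ring⟩
  have hφpi : φ π = 0 := hφzero π hs2pi
  have hφmpi : φ (-π) = 0 := hφzero (-π) hs2mpi
  have hdφpi : deriv φ π = 0 := by
    have := Filter.EventuallyEq.deriv_eq (f₁ := φ) (f := fun _ => (0:ℝ)) (hvan π hs2pi)
    simpa using this
  have hdφmpi : deriv φ (-π) = 0 := by
    have := Filter.EventuallyEq.deriv_eq (f₁ := φ) (f := fun _ => (0:ℝ)) (hvan (-π) hs2mpi)
    simpa using this
  have hψpi : ψ π = 0 := hψzero π hs2pi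
  have hψmpi : ψ (-π) = 0 := hψzero (-π) hs2mpi
    -- pointwise identity A
  have hA : ∀ (a t : ℝ), φ t * Real.cos (a*t)
      = ψ t * Real.sin ((a+2)*t) - ψ t * Real.sin ((a-2)*t) := by
    intro a t
    by_cases ht : Real.sin (2*t) = 0
    · simp [hφzero t ht, hψzero t ht]
    · have h1 : (a+2)*t = a*t + 2*t := by ring
      have h2 : (a-2)*t = a*t - 2*t := by ring
      rw [h1, h2, Real.sin_add, Real.sin_sub]
      have hφψ : φ t = ψ t * (2 * Real.sin (2*t)) := by
        rw [hψdef]; field_simp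
      rw [hφψ]; ring
  -- pointwise identity B
  have hB : ∀ t : ℝ, φ t * (1/(2 * Real.cos t)) = 2 * (ψ t * Real.sin t) := by
    intro t
    by_cases ht : Real.sin (2*t) = 0
    · simp [hφzero t ht, hψzero t ht]
    · have hst : Real.sin t ≠ 0 := by
        intro h; apply ht; rw [Real.sin_two_mul, h]; ring
      have hct : Real.cos t ≠ 0 := by
        intro h; apply ht; rw [Real.sin_two_mul, h]; ring
      rw [hψdef]; simp only
      rw [Real.sin_two_mul]
      field_simp
  -- derivative helpers
  have hder_sin : ∀ (μ x : ℝ), μ ≠ 0 → HasDerivAt (fun t => μ⁻¹ * Real.sin (μ*t)) (Real.cos (μ*x)) x := by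
    intro μ x hμ
    have h1 : HasDerivAt (fun t : ℝ => μ * t) μ x := by
      simpa using (hasDerivAt_id x).const_mul μ
    have h2 : HasDerivAt (fun t => Real.sin (μ*t)) (Real.cos (μ*x) * μ) x :=
      (Real.hasDerivAt_sin (μ*x)).comp x h1
    have h3 := h2.const_mul μ⁻¹
    refine h3.congr_deriv ?_
    rw [mul_comm (Real.cos _) μ, inv_mul_cancel_left₀ hμ]
  have hder_cos : ∀ (μ x : ℝ), μ ≠ 0 → HasDerivAt (fun t => -(μ⁻¹) * Real.cos (μ*t)) (Real.sin (μ*x)) x := by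
    intro μ x hμ
    have h1 : HasDerivAt (fun t : ℝ => μ * t) μ x := by
      simpa using (hasDerivAt_id x).const_mul μ
    have h2 : HasDerivAt (fun t => Real.cos (μ*t)) (-Real.sin (μ*x) * μ) x :=
      (Real.hasDerivAt_cos (μ*x)).comp x h1
    have h3 := h2.const_mul (-(μ⁻¹))
    refine h3.congr_deriv ?_
    rw [mul_comm (-Real.sin _) μ, neg_mul, inv_mul_cancel_left₀ hμ, neg_neg]
  -- generic integration by parts against cos
  have hP : ∀ u : ℝ → ℝ, ContDiff ℝ (⊤:ℕ∞) u → u π = 0 → u (-π) = 0 → ∀ μ : ℝ, μ ≠ 0 →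
      (∫ t in (-π)..π, u t * Real.cos (μ*t))
        = -(μ⁻¹) * ∫ t in (-π)..π, deriv u t * Real.sin (μ*t) := by
    intro u hu hupi humpi μ hμ
    have h := intervalIntegral.integral_mul_deriv_eq_deriv_mul
      (u := u) (v := fun t => μ⁻¹ * Real.sin (μ*t)) (u' := deriv u)
      (v' := fun t => Real.cos (μ*t)) (a := -π) (b := π)
      (fun x _ => (hu.differentiable (by simp) x).hasDerivAt)
      (fun x _ => hder_sin μ x hμ)
      ((contDiff_infty_iff_deriv.mp hu).2.continuous.intervalIntegrable _ _)
      ((Real.continuous_cos.comp (continuous_const.mul continuous_id)).intervalIntegrable _ _)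
    rw [h, hupi, humpi]
    have h2 : (fun x => deriv u x * (μ⁻¹ * Real.sin (μ*x)))
        = fun x => μ⁻¹ * (deriv u x * Real.sin (μ*x)) := by funext x; ring
    simp only [h2]
    rw [intervalIntegral.integral_const_mul]
    ring
  -- generic integration by parts against sin
  have hQ : ∀ u : ℝ → ℝ, ContDiff ℝ (⊤:ℕ∞) u → u π = 0 → u (-π) = 0 → ∀ μ : ℝ, μ ≠ 0 →
      (∫ t in (-π)..π, u t * Real.sin (μ*t))
        = μ⁻¹ * ∫ t in (-π)..π, deriv u t * Real.cos (μ*t) := by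
    intro u hu hupi humpi μ hμ
    have h := intervalIntegral.integral_mul_deriv_eq_deriv_mul
      (u := u) (v := fun t => -(μ⁻¹) * Real.cos (μ*t)) (u' := deriv u)
      (v' := fun t => Real.sin (μ*t)) (a := -π) (b := π)
      (fun x _ => (hu.differentiable (by simp) x).hasDerivAt)
      (fun x _ => hder_cos μ x hμ)
      ((contDiff_infty_iff_deriv.mp hu).2.continuous.intervalIntegrable _ _)
      ((Real.continuous_sin.comp (continuous_const.mul continuous_id)).intervalIntegrable _ _)
    rw [h, hupi, humpi]
    have h2 : (fun x => deriv u x * (-(μ⁻¹) * Real.cos (μ*x)))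
        = fun x => (-(μ⁻¹)) * (deriv u x * Real.cos (μ*x)) := by funext x; ring
    simp only [h2]
    rw [intervalIntegral.integral_const_mul]
    ring
  -- bounds on compact interval
  obtain ⟨M2, hM2⟩ := (isCompact_uIcc (a := -π) (b := π)).exists_bound_of_continuousOn
    (hφ2.continuous.continuousOn)
  have hM2nn : 0 ≤ M2 := le_trans (norm_nonneg _) (hM2 (-π) Set.left_mem_uIcc)
  obtain ⟨Mψ, hMψ⟩ := (isCompact_uIcc (a := -π) (b := π)).exists_bound_of_continuousOn
    (hψ1.continuous.continuousOn)
  have hMψnn : 0 ≤ Mψ := le_trans (norm_nonneg _) (hMψ (-π) Set.left_mem_uIcc)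
  have habs : |π - (-π)| = 2*π := by rw [abs_of_pos (by linarith)]; ring
  have hJbound : ∀ (g : ℝ → ℝ) (M : ℝ), (∀ x ∈ Set.uIcc (-π) π, ‖g x‖ ≤ M) → ∀ μ : ℝ,
      |∫ t in (-π)..π, g t * Real.cos (μ*t)| ≤ M * (2*π) := by
    intro g M hg μ
    have h := intervalIntegral.norm_integral_le_of_norm_le_const (C := M)
      (f := fun t => g t * Real.cos (μ*t)) (a := -π) (b := π) ?_
    · rw [habs] at h; exact h
    · intro x hx
      have h1 : ‖g x * Real.cos (μ*x)‖ = ‖g x‖ * ‖Real.cos (μ*x)‖ := norm_mul _ _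
      rw [h1]
      calc ‖g x‖ * ‖Real.cos (μ*x)‖ ≤ M * 1 := by
            apply mul_le_mul (hg x (Set.uIoc_subset_uIcc hx)) ?_ (norm_nonneg _)
              (le_trans (norm_nonneg _) (hg x (Set.uIoc_subset_uIcc hx)))
            rw [Real.norm_eq_abs]; exact Real.abs_cos_le_one _
        _ = M := mul_one M
  -- decay of Fourier coefficients
  have hdecay : ∀ μ : ℝ, μ ≠ 0 →
      |∫ t in (-π)..π, φ t * Real.cos (μ*t)| ≤ (M2 * (2*π)) / μ^2 := by
    intro μ hμ
    rw [hP φ hφ hφpi hφmpi μ hμ, hQ (deriv φ) hφ1 hdφpi hdφmpi μ hμ]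
    have h1 := hJbound (deriv (deriv φ)) M2 hM2 μ
    set J := ∫ t in (-π)..π, deriv (deriv φ) t * Real.cos (μ*t) with hJ
    have e : (-(μ⁻¹)) * (μ⁻¹ * J) = -(J / μ^2) := by
      rw [pow_two]; field_simp
    rw [e, abs_neg, abs_div, abs_of_nonneg (sq_nonneg μ)]
    exact (div_le_div_iff_of_pos_right (by positivity)).mpr h1
    -- Riemann-Lebesgue type bound for ψ
  have hRL : ∀ μ : ℝ, 0 < μ →
      |∫ t in (-π)..π, ψ t * Real.sin (μ*t)| ≤ (Mψ * (2*π)) / μ := by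
    intro μ hμ
    rw [hQ ψ hψ_smooth hψpi hψmpi μ hμ.ne']
    have h1 := hJbound (deriv ψ) Mψ hMψ μ
    rw [abs_mul, abs_inv, abs_of_pos hμ]
    rw [div_eq_inv_mul]
    exact mul_le_mul_of_nonneg_left h1 (by positivity)
  set i : ℕ → ℕ := fun j => 4*j+3 with hidef
  have hinj : Function.Injective i := by intro a b h; simp only [hidef] at h; omega
  have hrange : ∀ x ∉ Set.range i,
      (fun m : ℕ =>
        if 1 ≤ m ∧ m % 4 = 3 then
          (1 / Real.pi) * ∫ t in (-Real.pi)..Real.pi, φ t * Real.cos (m * t)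
        else 0) x = 0 := by
    intro x hx
    simp only
    rw [if_neg]
    rintro ⟨h1, h2⟩
    exact hx ⟨x/4, by simp only [hidef]; omega⟩
  rw [← Function.Injective.hasSum_iff hinj hrange]
  have hfc : ∀ j : ℕ, ((fun m : ℕ =>
        if 1 ≤ m ∧ m % 4 = 3 then
          (1 / Real.pi) * ∫ t in (-Real.pi)..Real.pi, φ t * Real.cos (m * t)
        else 0) ∘ i) j
      = (1/π) * ∫ t in (-π)..π, φ t * Real.cos ((4*(j:ℝ)+3) * t) := by
    intro j
    simp only [Function.comp, hidef]
    rw [if_pos (by omega)]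
    have hc : ((4*j+3 : ℕ) : ℝ) = 4*(j:ℝ)+3 := by push_cast; ring
    rw [hc]
  -- summability
  have hsummable : Summable ((fun m : ℕ =>
        if 1 ≤ m ∧ m % 4 = 3 then
          (1 / Real.pi) * ∫ t in (-Real.pi)..Real.pi, φ t * Real.cos (m * t)
        else 0) ∘ i) := by
    apply Summable.of_norm_bounded (g := fun j : ℕ => (2*M2) * (1/((j:ℝ)+1)^2))
    · apply Summable.mul_left
      have h := (Real.summable_one_div_nat_pow (p := 2)).mpr one_lt_two
      have h2 := (summable_nat_add_iff 1).mpr h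
      refine h2.congr fun n => ?_
      push_cast
      ring
    · intro j
      rw [hfc j]
      have hμ : (0:ℝ) < 4*(j:ℝ)+3 := by positivity
      have hd := hdecay (4*(j:ℝ)+3) hμ.ne'
      rw [Real.norm_eq_abs, abs_mul]
      have h1 : |1/π| = 1/π := abs_of_pos (by positivity)
      rw [h1]
      calc (1/π) * |∫ t in (-π)..π, φ t * Real.cos ((4*(j:ℝ)+3)*t)|
          ≤ (1/π) * ((M2 * (2*π)) / (4*(j:ℝ)+3)^2) := by
            exact mul_le_mul_of_nonneg_left hd (by positivity)
        _ = (2*M2) * (1/(4*(j:ℝ)+3)^2) := by field_simp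
        _ ≤ (2*M2) * (1/((j:ℝ)+1)^2) := by
            apply mul_le_mul_of_nonneg_left ?_ (by positivity)
            apply one_div_le_one_div_of_le (by positivity)
            have : (j:ℝ)+1 ≤ 4*(j:ℝ)+3 := by linarith [Nat.cast_nonneg (α := ℝ) j]
            nlinarith [Nat.cast_nonneg (α := ℝ) j]
  -- telescoping of partial sums
  have htel : ∀ (t : ℝ) (N : ℕ), ∑ j ∈ Finset.range N, φ t * Real.cos ((4*(j:ℝ)+3)*t)
      = ψ t * Real.sin ((4*(N:ℝ)+1)*t) - ψ t * Real.sin t := by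
    intro t N
    have hsum := Finset.sum_range_sub (fun k : ℕ => ψ t * Real.sin ((4*(k:ℝ)+1)*t)) N
    have h0 : (4*((0:ℕ):ℝ)+1)*t = t := by push_cast; ring
    rw [h0] at hsum
    rw [← hsum]
    apply Finset.sum_congr rfl
    intro j _
    have h := hA (4*(j:ℝ)+3) t
    have e1 : ((4*(j:ℝ)+3)+2) = 4*((j:ℝ)+1)+1 := by ring
    have e2 : ((4*(j:ℝ)+3)-2) = 4*(j:ℝ)+1 := by ring
    rw [e1, e2] at h
    rw [h]
    push_cast
    ring_nf
  have hpartial : ∀ N : ℕ, (∑ j ∈ Finset.range N, ((fun m : ℕ =>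
        if 1 ≤ m ∧ m % 4 = 3 then
          (1 / Real.pi) * ∫ t in (-Real.pi)..Real.pi, φ t * Real.cos (m * t)
        else 0) ∘ i) j)
      = (1/π) * (∫ t in (-π)..π, ψ t * Real.sin ((4*(N:ℝ)+1)*t))
        - (1/π) * ∫ t in (-π)..π, ψ t * Real.sin t := by
    intro N
    have hint : ∀ c : ℝ, IntervalIntegrable (fun t => φ t * Real.cos (c*t)) volume (-π) π :=
      fun c => (hφ.continuous.mul
        (by fun_prop : Continuous fun t : ℝ => Real.cos (c*t))).intervalIntegrable _ _
    calc ∑ j ∈ Finset.range N, ((fun m : ℕ =>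
          if 1 ≤ m ∧ m % 4 = 3 then
            (1 / Real.pi) * ∫ t in (-Real.pi)..Real.pi, φ t * Real.cos (m * t)
          else 0) ∘ i) j
        = (1/π) * ∑ j ∈ Finset.range N, ∫ t in (-π)..π, φ t * Real.cos ((4*(j:ℝ)+3)*t) := by
          rw [Finset.mul_sum]
          exact Finset.sum_congr rfl fun j _ => hfc j
      _ = (1/π) * ∫ t in (-π)..π, ∑ j ∈ Finset.range N, φ t * Real.cos ((4*(j:ℝ)+3)*t) := by
          rw [intervalIntegral.integral_finset_sum (fun j _ => hint _)]
      _ = (1/π) * ∫ t in (-π)..π, (ψ t * Real.sin ((4*(N:ℝ)+1)*t) - ψ t * Real.sin t) := by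
          congr 1
          apply intervalIntegral.integral_congr
          intro t _
          exact htel t N
      _ = (1/π) * (∫ t in (-π)..π, ψ t * Real.sin ((4*(N:ℝ)+1)*t))
            - (1/π) * ∫ t in (-π)..π, ψ t * Real.sin t := by
          rw [intervalIntegral.integral_sub (f := fun t => ψ t * Real.sin ((4*(N:ℝ)+1)*t)) (g := fun t => ψ t * Real.sin t) ((hψ_smooth.continuous.mul
            (by fun_prop : Continuous fun t : ℝ => Real.sin ((4*(N:ℝ)+1)*t))).intervalIntegrable _ _)
            ((hψ_smooth.continuous.mul Real.continuous_sin).intervalIntegrable _ _)]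
          ring
  -- first term tends to zero
  have hlim1 : Tendsto (fun N : ℕ => (1/π) * ∫ t in (-π)..π, ψ t * Real.sin ((4*(N:ℝ)+1)*t))
      atTop (𝓝 0) := by
    apply squeeze_zero_norm (a := fun N : ℕ => (1/π) * ((Mψ*(2*π))/(4*(N:ℝ)+1)))
    · intro N
      have hμ : (0:ℝ) < 4*(N:ℝ)+1 := by positivity
      rw [Real.norm_eq_abs, abs_mul, abs_of_pos (show (0:ℝ) < 1/π by positivity)]
      exact mul_le_mul_of_nonneg_left (hRL _ hμ) (by positivity)
    · have h4N : Tendsto (fun N : ℕ => 4*(N:ℝ)+1) atTop atTop := by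
        apply Filter.tendsto_atTop_add_const_right
        exact Tendsto.const_mul_atTop (by norm_num) tendsto_natCast_atTop_atTop
      have := Tendsto.div_atTop (tendsto_const_nhds (x := Mψ*(2*π))) h4N
      have h2 := this.const_mul (1/π)
      simpa using h2
  -- conclude
  rw [Summable.hasSum_iff_tendsto_nat hsummable]
  have heq : (fun N : ℕ => ∑ j ∈ Finset.range N, ((fun m : ℕ =>
        if 1 ≤ m ∧ m % 4 = 3 then
          (1 / Real.pi) * ∫ t in (-Real.pi)..Real.pi, φ t * Real.cos (m * t)
        else 0) ∘ i) j)
      = fun N : ℕ => (1/π) * (∫ t in (-π)..π, ψ t * Real.sin ((4*(N:ℝ)+1)*t))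
          - (1/π) * ∫ t in (-π)..π, ψ t * Real.sin t := funext hpartial
  rw [heq]
  have hL : -(1/(2*π)) * (∫ t in (-π)..π, φ t * (1/(2 * Real.cos t)))
      = 0 - (1/π) * ∫ t in (-π)..π, ψ t * Real.sin t := by
    have h1 : (∫ t in (-π)..π, φ t * (1/(2 * Real.cos t)))
        = ∫ t in (-π)..π, 2 * (ψ t * Real.sin t) := by
      apply intervalIntegral.integral_congr
      intro t _
      exact hB t
    rw [h1, intervalIntegral.integral_const_mul]
    field_simp
    ring
  rw [hL]
  exact hlim1.sub_const _
end

section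
/- Let m be an odd natural number. Then i^{−m} · 8^{−1/2} · e^{iπm/4} · ∑_{x ∈ {1,−1,i,−i}} x^{−m} · e^{2πi·tr(x/(4+4i))} equals e^{iπ(1−m)/4} if m ≡ 1 mod 4 and equals e^{iπ(3−m)/4} if m ≡ 3 mod 4. In particular this quantity equals 1 if m ≡ 1 or 3 mod 8, and equals −1 if m ≡ 5 or 7 mod 8. -/
/-- The trace of a complex number: `tr z = z + conj z`. -/
noncomputable def ctr (z : ℂ) : ℂ := z + (starRingEnd ℂ) z

/-- The Gauss-sum expression for the sign `W(ξ_m)` of the functional equation of the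
Hecke `L`-function attached to the character `ξ_m` of conductor `(2+2i)`. -/
noncomputable def Wxi (m : ℕ) : ℂ :=
  Complex.I ^ (-(m : ℤ)) * (((8 : ℝ) ^ (-(1/2 : ℝ)) : ℝ) : ℂ) *
    Complex.exp (Real.pi * Complex.I * m / 4) *
    ∑ x ∈ ({1, -1, Complex.I, -Complex.I} : Finset ℂ),
      x ^ (-(m : ℤ)) * Complex.exp (2 * Real.pi * Complex.I * ctr (x / (4 + 4 * Complex.I)))

/-! For `x ∈ {±1, ±i}` the trace `tr(x/(4+4i))` is `±1/4`, with the sign of `x`, so for odd `m` the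
terms at `x` and `-x` agree and the Gauss sum is `2i(1 + i⁻ᵐ)`. As `1 ± i = √2 e^{±πi/4}`, the factor
`8^{-1/2}` cancels and `W(ξ_m) = (-1)^⌊m/4⌋`, which is also the value of `e^{iπ(r-m)/4}` for
`r = m mod 4`. -/

section
open Complex
open scoped Real

theorem ctr_neg (z : ℂ) : ctr (-z) = -ctr z := by
  simp only [ctr, map_neg]; ring

theorem ctr_one_div_four_add_four_I : ctr (1 / (4 + 4 * I)) = 1 / 4 := by
  rw [ctr, add_conj]; norm_num [div_re, normSq]

theorem ctr_I_div_four_add_four_I : ctr (I / (4 + 4 * I)) = 1 / 4 := by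
  rw [ctr, add_conj]; norm_num [div_re, normSq]

theorem exp_two_pi_I_mul_quarter : exp (2 * π * I * (1 / 4)) = I := by
  rw [show 2 * π * I * (1 / 4) = π / 2 * I by ring, exp_pi_div_two_mul_I]

theorem exp_two_pi_I_mul_neg_quarter : exp (2 * π * I * -(1 / 4)) = -I := by
  rw [mul_neg, Complex.exp_neg, exp_two_pi_I_mul_quarter, inv_I]

theorem sum_zpow_neg_mul_exp_ctr {m : ℕ} (hm : Odd m) :
    ∑ x ∈ ({1, -1, I, -I} : Finset ℂ), x ^ (-(m : ℤ)) * exp (2 * π * I * ctr (x / (4 + 4 * I)))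
      = 2 * I * (1 + I ^ (-(m : ℤ))) := by
  have hodd : Odd (-(m : ℤ)) := hm.natCast.neg
  rw [Finset.sum_insert (by norm_num [Complex.ext_iff]), Finset.sum_insert (by norm_num [Complex.ext_iff]),
    Finset.sum_insert (by norm_num [Complex.ext_iff]), Finset.sum_singleton,
    neg_div, neg_div, ctr_neg, ctr_neg, hodd.neg_zpow, hodd.neg_zpow, ctr_one_div_four_add_four_I,
    ctr_I_div_four_add_four_I, exp_two_pi_I_mul_quarter, exp_two_pi_I_mul_neg_quarter, one_zpow]
  ring

theorem eight_rpow_neg_half : (8 : ℝ) ^ (-(1 / 2 : ℝ)) = (2 * √2)⁻¹ := by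
  rw [Real.rpow_neg (by norm_num), ← Real.sqrt_eq_rpow, show (8 : ℝ) = 2 ^ 2 * 2 by norm_num,
    Real.sqrt_mul (by positivity), Real.sqrt_sq (by norm_num)]

theorem Wxi_eq {m : ℕ} (hm : Odd m) :
    Wxi m = I ^ (-(m : ℤ)) * I * (1 + I ^ (-(m : ℤ))) * exp (π * I * m / 4) / √2 := by
  have hs0 : (√2 : ℂ) ≠ 0 := by exact_mod_cast (Real.sqrt_pos.2 two_pos).ne'
  rw [Wxi, sum_zpow_neg_mul_exp_ctr hm, eight_rpow_neg_half]
  push_cast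
  field_simp

theorem exp_pi_I_div_four : exp (π * I / 4) = √2 / 2 * (1 + I) := by
  rw [show π * I / 4 = (π / 4 : ℝ) * I by push_cast; ring, exp_mul_I, ← ofReal_cos, ← ofReal_sin,
    Real.cos_pi_div_four, Real.sin_pi_div_four]
  push_cast; ring

theorem exp_pi_I_mul_div_four (m : ℕ) :
    exp (π * I * m / 4) = (-1) ^ (m / 4) * exp (π * I / 4) ^ (m % 4) := by
  conv_lhs => rw [← Nat.div_add_mod m 4]
  rw [show π * I * ((4 * (m / 4) + m % 4 : ℕ) : ℂ) / 4 = (m / 4 : ℕ) * (π * I) + (m % 4 : ℕ) * (π * I / 4) by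
      push_cast; ring, Complex.exp_add, exp_nat_mul, exp_nat_mul, exp_pi_mul_I]

theorem I_zpow_neg_natCast (m : ℕ) : I ^ (-(m : ℤ)) = I ^ (-(m % 4 : ℕ) : ℤ) := by
  conv_lhs => rw [← Nat.div_add_mod m 4]
  rw [zpow_neg, zpow_neg, zpow_natCast, zpow_natCast, pow_add, pow_mul, I_pow_four, one_pow, one_mul]

theorem Wxi_eq_neg_one_pow {m : ℕ} (hm : Odd m) : Wxi m = (-1) ^ (m / 4) := by
  have hs : (√2 : ℂ) ^ 2 = 2 := by exact_mod_cast Real.sq_sqrt (zero_le_two (α := ℝ))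
  have hs0 : (√2 : ℂ) ≠ 0 := by exact_mod_cast (Real.sqrt_pos.2 two_pos).ne'
  have hr : m % 4 = 1 ∨ m % 4 = 3 := by rcases hm with ⟨j, rfl⟩; omega
  rw [Wxi_eq hm, I_zpow_neg_natCast, exp_pi_I_mul_div_four, exp_pi_I_div_four]
  rcases hr with hr | hr <;> rw [hr] <;> norm_num [zpow_neg, pow_succ, I_sq] <;> field_simp
  · linear_combination -I_sq
  · grind [I_sq]

theorem exp_pi_I_mul_sub_div_four {m r : ℕ} (h : m % 4 = r) :
    exp (π * I * (r - m) / 4) = (-1) ^ (m / 4) := by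
  have hm : (m : ℂ) = 4 * (m / 4 : ℕ) + r := by
    rw [← h]; exact_mod_cast (Nat.div_add_mod m 4).symm
  rw [show π * I * (r - m) / 4 = -((m / 4 : ℕ) * (π * I)) by rw [hm]; ring,
    Complex.exp_neg, exp_nat_mul, exp_pi_mul_I, ← inv_pow, inv_neg_one]

end

theorem sign_functional_equation_xi (m : ℕ) (hm : Odd m) :
    (m % 4 = 1 → Wxi m = Complex.exp (Real.pi * Complex.I * (1 - (m : ℂ)) / 4)) ∧
    (m % 4 = 3 → Wxi m = Complex.exp (Real.pi * Complex.I * (3 - (m : ℂ)) / 4)) ∧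
    (m % 8 = 1 ∨ m % 8 = 3 → Wxi m = 1) ∧
    (m % 8 = 5 ∨ m % 8 = 7 → Wxi m = -1) := by
  have hW := Wxi_eq_neg_one_pow hm
  refine ⟨fun h => ?_, fun h => ?_, fun h => ?_, fun h => ?_⟩
  · rw [hW, ← exp_pi_I_mul_sub_div_four h, Nat.cast_one]
  · rw [hW, ← exp_pi_I_mul_sub_div_four h, Nat.cast_ofNat]
  · rw [hW]; exact Even.neg_one_pow (by rw [Nat.even_iff]; omega)
  · rw [hW]; exact Odd.neg_one_pow (by rw [Nat.odd_iff]; omega)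
end

section
/- Let m be a natural number with m ≡ 2 mod 4. Then i^{−m} · 4^{−1/2} · ∑_{x ∈ {1,i}} x^{−m} · e^{2πi·tr(x/4)} = 1. -/
lemma rpow_four_neg_half : ((4 : ℝ) ^ (-(1/2 : ℝ)) : ℝ) = 1/2 := by
  rw [show (4:ℝ) = (2:ℝ)^(2:ℕ) by norm_num, ← Real.rpow_natCast ((2:ℝ)) 2,
    ← Real.rpow_mul (by norm_num)]
  norm_num [Real.rpow_neg_one]

lemma I_zpow_two_mod_four (m : ℕ) (hm : m % 4 = 2) :
    Complex.I ^ (-(m : ℤ)) = -1 := by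
  obtain ⟨k, rfl⟩ : ∃ k, m = 4*k+2 := ⟨m/4, by omega⟩
  push_cast
  rw [show -((4:ℤ)*k+2) = 4*(-k) + (-2) by ring, zpow_add₀ Complex.I_ne_zero,
    zpow_mul, show ((4:ℤ)) = ((4:ℕ):ℤ) by norm_num, zpow_natCast, Complex.I_pow_four,
    one_zpow, one_mul]
  simp only [zpow_neg, show ((2:ℤ)) = ((2:ℕ):ℤ) from rfl, zpow_natCast, Complex.I_sq]
  norm_num

theorem sign_functional_equation_xi_two_mod_four (m : ℕ) (hm : m % 4 = 2) :
    Complex.I ^ (-(m : ℤ)) * (((4 : ℝ) ^ (-(1/2 : ℝ)) : ℝ) : ℂ) *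
      ∑ x ∈ ({1, Complex.I} : Finset ℂ),
        x ^ (-(m : ℤ)) * Complex.exp (2 * Real.pi * Complex.I * ctr (x / 4)) = 1 := by
  rw [rpow_four_neg_half, I_zpow_two_mod_four m hm]
  rw [Finset.sum_pair (by simp [Complex.ext_iff] : (1:ℂ) ≠ Complex.I)]
  have h1 : ctr (1/4 : ℂ) = 1/2 := by
    simp [ctr, Complex.ext_iff]
    norm_num
  have h2 : ctr (Complex.I/4) = 0 := by
    simp [ctr, Complex.ext_iff, Complex.div_re, Complex.div_im]
    norm_num
  rw [h1, h2, I_zpow_two_mod_four m hm, one_zpow, mul_zero, Complex.exp_zero,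
    show 2 * (Real.pi:ℂ) * Complex.I * (1/2) = Real.pi * Complex.I by ring,
    Complex.exp_pi_mul_I]
  norm_num
end

section
/- Let a, b be integers such that a + 2bi ≡ 1 mod 2+2i in ℤ[i], and set n = a² + 4b². Then |a| ≡ 1 mod 4 if and only if either (n ≡ 1 mod 8 and a > 0) or (n ≡ 5 mod 8 and a < 0); and |a| ≡ 3 mod 4 if and only if either (n ≡ 1 mod 8 and a < 0) or (n ≡ 5 mod 8 and a > 0). -/
theorem abs_a_mod_four_iff (a b n : ℤ)
    (h : (⟨2, 2⟩ : GaussianInt) ∣ ((⟨a, 2 * b⟩ : GaussianInt) - 1))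
    (hn : n = a ^ 2 + 4 * b ^ 2) :
    (|a| ≡ 1 [ZMOD 4] ↔ (n ≡ 1 [ZMOD 8] ∧ 0 < a) ∨ (n ≡ 5 [ZMOD 8] ∧ a < 0)) ∧
      (|a| ≡ 3 [ZMOD 4] ↔ (n ≡ 1 [ZMOD 8] ∧ a < 0) ∨ (n ≡ 5 [ZMOD 8] ∧ 0 < a)) := by
  obtain ⟨c, hc⟩ := h
  have hre := congrArg Zsqrtd.re hc
  have him := congrArg Zsqrtd.im hc
  simp [Zsqrtd.re_mul, Zsqrtd.im_mul] at hre him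
  -- hre : a - 1 = 2 * c.re - 2 * c.im (roughly), him : 2*b = 2*c.re + 2*c.im
  set x := c.re with hx
  set y := c.im with hy
  -- a = 1 + 2*(x - y), b = x + y
  have ha : a = 1 + 2 * x - 2 * y := by omega
  have hb : b = x + y := by omega
  -- a^2 % 8 = 1
  obtain ⟨m, hm⟩ : Even ((x - y) * ((x - y) + 1)) := Int.even_mul_succ_self _
  have hA : a ^ 2 = 8 * m + 1 := by
    subst ha; linear_combination 4 * hm
  -- case on parity of b
  have hN : (Even b ∧ n % 8 = 1) ∨ (¬ Even b ∧ n % 8 = 5) := by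
    rcases Int.even_or_odd b with ⟨u, hu⟩ | ⟨u, hu⟩
    · left
      refine ⟨⟨u, hu⟩, ?_⟩
      have hB : b ^ 2 = 4 * u ^ 2 := by subst hu; ring
      have hn' : n = 8 * m + 1 + 16 * u ^ 2 := by rw [hn, hA, hB]; ring
      have := sq_nonneg u
      omega
    · right
      obtain ⟨w, hw⟩ : Even (u * (u + 1)) := Int.even_mul_succ_self _
      have hB : b ^ 2 = 8 * w + 1 := by subst hu; linear_combination 4 * hw
      constructor
      · rw [Int.even_iff]; omega
      · have hn' : n = 8 * m + 1 + 4 * (8 * w + 1) := by rw [hn, hA, hB]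
        omega
  have hab : a % 4 = (1 + 2 * b) % 4 := by omega
  simp only [Int.ModEq, Int.even_iff] at *
  rcases abs_cases a with ⟨h1, h2⟩ | ⟨h1, h2⟩ <;> rw [h1] <;>
    constructor <;> constructor <;> intro hh <;> omega
end

section
/- Let φ₁ : [0,π] → ℝ be the function equal to 1 on [0,π/4] ∪ [3π/4,π] and equal to −1 on (π/4,3π/4). Then the Cauchy principal value of ∫_0^π φ₁(t)·cos(t)/cos(2t) dt around the poles t = π/4 and t = 3π/4 equals 0; that is, lim_{ε→0⁺} ( ∫_0^{π/4−ε} + ∫_{π/4+ε}^{3π/4−ε} + ∫_{3π/4+ε}^{π} ) φ₁(t)·cos(t)/cos(2t) dt = 0. -/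
theorem principal_value_phi_one_vanishes
    (φ₁ : ℝ → ℝ)
    (h1 : ∀ t ∈ Set.Icc (0 : ℝ) (Real.pi / 4) ∪ Set.Icc (3 * Real.pi / 4) Real.pi, φ₁ t = 1)
    (h2 : ∀ t ∈ Set.Ioo (Real.pi / 4) (3 * Real.pi / 4), φ₁ t = -1) :
    Filter.Tendsto
      (fun ε : ℝ =>
        (∫ t in (0 : ℝ)..(Real.pi / 4 - ε), φ₁ t * Real.cos t / Real.cos (2 * t)) +
          (∫ t in (Real.pi / 4 + ε)..(3 * Real.pi / 4 - ε), φ₁ t * Real.cos t / Real.cos (2 * t)) +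
          ∫ t in (3 * Real.pi / 4 + ε)..Real.pi, φ₁ t * Real.cos t / Real.cos (2 * t))
      (nhdsWithin 0 (Set.Ioi 0)) (nhds 0) := by
  set π := Real.pi
  have hπ : 0 < π := Real.pi_pos
  set F : ℝ → ℝ := fun t => φ₁ t * Real.cos t / Real.cos (2 * t) with hF
  -- symmetry of the pure trig part
  have hFsym : ∀ t : ℝ, φ₁ (π - t) = φ₁ t →
      F (π - t) = - F t := by
    intro t hφ
    simp only [hF]
    rw [hφ, Real.cos_pi_sub]
    have h2t : Real.cos (2 * (π - t)) = Real.cos (2 * t) := by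
      rw [mul_sub, Real.cos_sub, Real.cos_two_pi, Real.sin_two_pi]
      ring
    rw [h2t]
    ring
  have key : ∀ ε ∈ Set.Ioo (0:ℝ) (π/4),
      ((∫ t in (0:ℝ)..(π/4 - ε), F t) +
        (∫ t in (π/4 + ε)..(3*π/4 - ε), F t) +
        ∫ t in (3*π/4 + ε)..π, F t) = 0 := by
    intro ε hε
    obtain ⟨hε0, hε4⟩ := hε
    -- middle integral is zero
    have hmid : (∫ t in (π/4 + ε)..(3*π/4 - ε), F t) = 0 := by
      have hsub : (∫ t in (π/4 + ε)..(3*π/4 - ε), F (π - t)) =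
          ∫ t in (π/4 + ε)..(3*π/4 - ε), F t := by
        rw [intervalIntegral.integral_comp_sub_left F π]
        congr 1 <;> ring
      have hcong : (∫ t in (π/4 + ε)..(3*π/4 - ε), F (π - t)) =
          ∫ t in (π/4 + ε)..(3*π/4 - ε), - F t := by
        apply intervalIntegral.integral_congr
        intro t ht
        rw [Set.uIcc_of_le (by linarith)] at ht
        obtain ⟨ht1, ht2⟩ := ht
        apply hFsym
        rw [h2 t ⟨by linarith, by linarith⟩, h2 (π - t) ⟨by linarith, by linarith⟩]
      rw [hcong, intervalIntegral.integral_neg] at hsub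
      linarith
    -- third integral cancels first
    have houter : (∫ t in (3*π/4 + ε)..π, F t) = - ∫ t in (0:ℝ)..(π/4 - ε), F t := by
      have hsub : (∫ t in (0:ℝ)..(π/4 - ε), F (π - t)) =
          ∫ t in (3*π/4 + ε)..π, F t := by
        rw [intervalIntegral.integral_comp_sub_left F π]
        congr 1 <;> ring
      have hcong : (∫ t in (0:ℝ)..(π/4 - ε), F (π - t)) =
          ∫ t in (0:ℝ)..(π/4 - ε), - F t := by
        apply intervalIntegral.integral_congr
        intro t ht
        rw [Set.uIcc_of_le (by linarith)] at ht
        obtain ⟨ht1, ht2⟩ := ht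
        apply hFsym
        rw [h1 t (Or.inl ⟨by linarith, by linarith⟩),
          h1 (π - t) (Or.inr ⟨by linarith, by linarith⟩)]
      rw [hcong, intervalIntegral.integral_neg] at hsub
      linarith
    rw [hmid, houter]
    ring
  have hev : ∀ᶠ ε in nhdsWithin (0:ℝ) (Set.Ioi 0),
      ((∫ t in (0:ℝ)..(π/4 - ε), F t) +
        (∫ t in (π/4 + ε)..(3*π/4 - ε), F t) +
        ∫ t in (3*π/4 + ε)..π, F t) = 0 := by
    filter_upwards [Ioo_mem_nhdsGT_of_mem (Set.left_mem_Ico.mpr (by linarith : (0:ℝ) < π/4))]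
      with ε hε using key ε hε
  exact Filter.Tendsto.congr' (Filter.EventuallyEq.symm hev) tendsto_const_nhds
end
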